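/- Let n be a positive integer, λ an infinite cardinal, and τ a shift-continuous T₁ topology on the semigroup I_λ^n (i.e., all left and right translations x ↦ ax and x ↦ xa are continuous). Then for every α ∈ I_λ^n the up-set ↑α = {β : α ≼ β} is both open and closed in (I_λ^n, τ). -/

import Mathlib

open Set Topology

universe v

namespace ISemi

/-- The set of partial injective transformations (partial bijections) of `ι`
with rank (cardinality of the range, equivalently of the domain) at most `n`. -/
def Elem (ι : Type*) (n : ℕ) : Type _ :=
  {f : ι ≃. ι // {a : ι | (f a).isSome}.encard ≤ (n : ℕ∞)}

variable {ι : Type*} {n : ℕ}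

/-- Composition of partial bijections (written multiplicatively). -/
instance : Semigroup (Elem ι n) where
  mul f g := ⟨f.1.trans g.1, by
    refine le_trans (Set.encard_mono ?_) f.2
    intro a ha
    simp only [Set.mem_setOf_eq] at *
    rcases Option.isSome_iff_exists.1 ha with ⟨c, hc⟩
    rcases (PEquiv.trans_eq_some _ _ _ _).1 hc with ⟨b, hb, -⟩
    simp [hb]⟩
  mul_assoc f g h := Subtype.ext (PEquiv.trans_assoc f.1 g.1 h.1)

/-- The inverse partial bijection. -/
def inv (f : Elem ι n) : Elem ι n := ⟨f.1.symm, by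
  have key : ∀ (g : ι ≃. ι), {b : ι | (g.symm b).isSome} ⊆
      (fun p : {a : ι | (g a).isSome} => (g p.1).get p.2) '' Set.univ := by
    intro g b hb
    rcases Option.isSome_iff_exists.1 hb with ⟨a, ha⟩
    have ha' : b ∈ g a := (PEquiv.mem_iff_mem g).1 (Option.mem_def.2 ha)
    simp only [Option.mem_def] at ha'
    refine ⟨⟨a, ?_⟩, Set.mem_univ _, ?_⟩
    · simp [Set.mem_setOf_eq, ha']
    · simp [ha']
  calc {b : ι | (f.1.symm b).isSome}.encard
      ≤ ((fun p : {a : ι | (f.1 a).isSome} => (f.1 p.1).get p.2) '' Set.univ).encard :=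
        Set.encard_mono (key f.1)
    _ ≤ (Set.univ : Set {a : ι | (f.1 a).isSome}).encard := Set.encard_image_le _ _
    _ = {a : ι | (f.1 a).isSome}.encard := by rw [Set.encard_univ]; rfl
    _ ≤ (n : ℕ∞) := f.2⟩

/-- The zero (the empty partial map). -/
def zero (ι : Type*) (n : ℕ) : Elem ι n := ⟨⊥, by simp [PEquiv.bot_apply]⟩

/-- idempotents -/
def IsIdem (e : Elem ι n) : Prop := e * e = e

/-- The natural partial order on the inverse semigroup `Elem ι n`:
`f ≼ g` iff `f = e * g` for some idempotent `e`. -/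
def nle (f g : Elem ι n) : Prop := ∃ e : Elem ι n, IsIdem e ∧ f = e * g

/-- up-set of `f` w.r.t. the natural partial order -/
def upset (f : Elem ι n) : Set (Elem ι n) := {g | nle f g}

/-- the rank of a partial bijection: the cardinality of its domain (= range) -/
noncomputable def rank (f : Elem ι n) : ℕ∞ := {a : ι | (f.1 a).isSome}.encard

def dom (f : Elem ι n) : Set ι := {a : ι | (f.1 a).isSome}

def ran (f : Elem ι n) : Set ι := {b : ι | (f.1.symm b).isSome}

/-- A topology on `Elem ι n` is shift-continuous if all left and right
translations are continuous. -/
def ShiftContinuous (ι : Type*) (n : ℕ) [TopologicalSpace (Elem ι n)] : Prop :=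
  ∀ a : Elem ι n, Continuous (fun x : Elem ι n => a * x) ∧
    Continuous (fun x : Elem ι n => x * a)

/-- A space is feebly compact if every locally finite family of nonempty open
sets is finite. -/
def FeeblyCompact (X : Type*) [TopologicalSpace X] : Prop :=
  ∀ 𝒰 : Set (Set X), (∀ U ∈ 𝒰, IsOpen U ∧ U.Nonempty) →
    LocallyFinite (fun U : 𝒰 => (U : Set X)) → 𝒰.Finite

/-- A space is `d`-feebly compact if every discrete family of open sets is
finite; a family is discrete if every point has a neighbourhood meeting at
most one member of the family. -/
def DFeeblyCompact (X : Type*) [TopologicalSpace X] : Prop :=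
  ∀ 𝒰 : Set (Set X), (∀ U ∈ 𝒰, IsOpen U) →
    (∀ x : X, ∃ V ∈ 𝓝 x, {U ∈ 𝒰 | (U ∩ V).Nonempty}.Subsingleton) → 𝒰.Finite

/-- countably pracompact: there is a dense set `A` such that every infinite
subset of `A` has an accumulation point in `X`. -/
def CountablyPracompact (X : Type*) [TopologicalSpace X] : Prop :=
  ∃ A : Set X, Dense A ∧ ∀ B ⊆ A, B.Infinite → ∃ x : X, AccPt x (Filter.principal B)

/-- H-closed: closed in every Hausdorff space in which it embeds. -/
def HClosed (X : Type*) [TopologicalSpace X] : Prop :=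
  ∀ (Y : Type v) (_ : TopologicalSpace Y), T2Space Y →
    ∀ e : X → Y, IsEmbedding e → IsClosed (Set.range e)

/-- infra H-closed: every continuous image in a first-countable Hausdorff
space is closed. -/
def InfraHClosed (X : Type*) [TopologicalSpace X] : Prop :=
  ∀ (Y : Type v) (_ : TopologicalSpace Y), T2Space Y →
    FirstCountableTopology Y → ∀ f : X → Y, Continuous f → IsClosed (Set.range f)

/-- `Y`-compactness: every continuous image in `Y` is compact. -/
def YCompact (X : Type*) [TopologicalSpace X] (Y : Type*) [TopologicalSpace Y] : Prop :=
  ∀ f : X → Y, Continuous f → IsCompact (Set.range f)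

/-- scattered: every nonempty subset has a point isolated in it. -/
def Scattered (X : Type*) [TopologicalSpace X] : Prop :=
  ∀ S : Set X, S.Nonempty → ∃ x ∈ S, ∃ U : Set X, IsOpen U ∧ U ∩ S = {x}

/-- semiregular: there is a base consisting of regular open sets. -/
def Semiregular (X : Type*) [TopologicalSpace X] : Prop :=
  ∃ B : Set (Set X), TopologicalSpace.IsTopologicalBasis B ∧
    ∀ U ∈ B, interior (closure U) = U

/-- countably compact: every countable open cover has a finite subcover. -/
def CountablyCompact (X : Type*) [TopologicalSpace X] : Prop :=
  ∀ 𝒰 : Set (Set X), 𝒰.Countable → (∀ U ∈ 𝒰, IsOpen U) → ⋃₀ 𝒰 = Set.univ →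
    ∃ 𝒱 ⊆ 𝒰, 𝒱.Finite ∧ ⋃₀ 𝒱 = Set.univ

end ISemi

/-!
An idempotent of `I_λ^n` is a partial identity, so `α ≼ β` just says that `β` extends `α`;
as `α` has finite domain, `↑α` is the intersection of finitely many sets `{β | β x = y}`.
Each of these is the preimage of a point under the continuous map
`β ↦ (x ↦ x) * β * (y ↦ y)`, which takes only the two values `x ↦ y` and `0`; in a
`T₁` space such a preimage is both closed and open.
-/

namespace PEquiv

variable {α β : Type*}

theorem le_refl_of_trans_self_eq {e : α ≃. α} (he : e.trans e = e) : e ≤ PEquiv.refl α := by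
  rw [le_def]
  intro x z hz
  have hzz : z ∈ e.trans e x := by rwa [he]
  obtain ⟨w, hw, hwz⟩ := (mem_trans e e x z).1 hzz
  obtain rfl : w = z := Option.some_injective _ (hw.symm.trans hz)
  exact e.inj hwz hz ▸ rfl

theorem trans_le_of_le_refl {e : α ≃. α} (he : e ≤ PEquiv.refl α) (g : α ≃. β) :
    e.trans g ≤ g := by
  rw [le_def]
  intro x z hz
  obtain ⟨w, hw, hwz⟩ := (mem_trans e g x z).1 hz
  obtain rfl : x = w := Option.some_injective _ (le_def.1 he x w hw)
  exact hwz

theorem self_trans_symm_trans_of_le {f g : α ≃. β} (h : f ≤ g) :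
    (f.trans f.symm).trans g = f := by
  refine ext fun x => ?_
  change ((f x).bind f.symm).bind g = f x
  cases hfx : f x with
  | none => rfl
  | some y =>
    rw [Option.bind_some, (eq_some_iff f).2 hfx, Option.bind_some]
    exact le_def.1 h x y hfx

theorem self_trans_symm_idempotent (f : α ≃. β) :
    (f.trans f.symm).trans (f.trans f.symm) = f.trans f.symm := by
  have hsymm := self_trans_symm_trans_of_le (le_refl f.symm)
  rw [symm_symm] at hsymm
  rw [trans_assoc, ← trans_assoc f.symm, hsymm]

end PEquiv

namespace ISemi

variable {ι : Type*} {n : ℕ}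

theorem mul_val (f g : Elem ι n) : (f * g).1 = f.1.trans g.1 := rfl

theorem IsIdem.le_refl {e : Elem ι n} (he : IsIdem e) : e.1 ≤ PEquiv.refl ι :=
  PEquiv.le_refl_of_trans_self_eq (congrArg Subtype.val he)

theorem isIdem_mul_inv (f : Elem ι n) : IsIdem (f * inv f) :=
  Subtype.ext (PEquiv.self_trans_symm_idempotent f.1)

theorem mem_upset_iff {a β : Elem ι n} : β ∈ upset a ↔ a.1 ≤ β.1 := by
  constructor
  · rintro ⟨e, he, rfl⟩
    exact PEquiv.trans_le_of_le_refl he.le_refl β.1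
  · exact fun h => ⟨a * inv a, isIdem_mul_inv a,
      Subtype.ext (PEquiv.self_trans_symm_trans_of_le h).symm⟩

theorem upset_eq_biInter (a : Elem ι n) :
    upset a = ⋂ x ∈ dom a, {β : Elem ι n | β.1 x = a.1 x} := by
  ext β
  simp only [mem_upset_iff, PEquiv.le_def, Set.mem_iInter, Set.mem_ofPred_eq, dom,
    Option.mem_def]
  constructor
  · intro h x hx
    obtain ⟨y, hy⟩ := Option.isSome_iff_exists.1 hx
    rw [hy, h x y hy]
  · intro h x y hy
    rw [h x (by simp [hy]), hy]

theorem dom_finite (a : Elem ι n) : (dom a).Finite :=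
  Set.encard_ne_top_iff.1 (a.2.trans_lt (WithTop.coe_lt_top n)).ne

open Classical in
noncomputable def single (hn : 0 < n) (x y : ι) : Elem ι n :=
  ⟨PEquiv.single x y, by
    have hdom : {a : ι | (PEquiv.single x y a).isSome} = {x} := by
      ext a
      rcases eq_or_ne x a with rfl | hxa
      · simp [PEquiv.single_apply]
      · simp [PEquiv.single_apply_of_ne hxa, Ne.symm hxa]
    rw [hdom, Set.encard_singleton]
    exact_mod_cast hn⟩

open Classical in
theorem single_val (hn : 0 < n) (x y : ι) : (single hn x y).1 = PEquiv.single x y := rfl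

open Classical in
theorem single_ne_zero (hn : 0 < n) (x y : ι) : single hn x y ≠ zero ι n := fun h => by
  simpa [single, zero, PEquiv.single_apply, PEquiv.bot_apply] using
    congrArg (fun f : Elem ι n => f.1 x) h

open Classical in
theorem single_mul_mul_single (hn : 0 < n) (x y : ι) (β : Elem ι n) :
    single hn x x * β * single hn y y =
      if β.1 x = some y then single hn x y else zero ι n := by
  split_ifs with hxy <;> refine Subtype.ext ?_ <;>
    rw [mul_val, mul_val, single_val, single_val]
  · rw [single_val, PEquiv.single_trans_of_mem x hxy, PEquiv.single_trans_single]
  · cases hβx : β.1 x with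
    | none => exact (PEquiv.single_trans_of_eq_none x hβx).symm ▸ PEquiv.bot_trans _
    | some z =>
      have hzy : z ≠ y := fun h => hxy (h ▸ hβx)
      rw [PEquiv.single_trans_of_mem x (Option.mem_def.2 hβx),
        PEquiv.single_trans_single_of_ne hzy]
      rfl

theorem isClopen_setOf_apply_eq_some [TopologicalSpace (Elem ι n)] [T1Space (Elem ι n)]
    (hshift : ShiftContinuous ι n) (hn : 0 < n) (x y : ι) :
    IsClopen {β : Elem ι n | β.1 x = some y} := by
  set φ : Elem ι n → Elem ι n := fun β => single hn x x * β * single hn y y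
  have hφ : Continuous φ := (hshift _).2.comp (hshift _).1
  have hφ_single : φ ⁻¹' {single hn x y} = {β | β.1 x = some y} := by
    ext β
    simp only [φ, Set.mem_preimage, Set.mem_singleton_iff, single_mul_mul_single,
      Set.mem_ofPred_eq]
    split_ifs with h <;> simp [h, (single_ne_zero hn x y).symm]
  have hφ_zero : (φ ⁻¹' {zero ι n})ᶜ = {β | β.1 x = some y} := by
    ext β
    simp only [φ, Set.mem_compl_iff, Set.mem_preimage, Set.mem_singleton_iff,
      single_mul_mul_single, Set.mem_ofPred_eq]
    split_ifs with h <;> simp [h, single_ne_zero hn x y]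
  exact ⟨hφ_single ▸ isClosed_singleton.preimage hφ,
    hφ_zero ▸ (isClosed_singleton.preimage hφ).isOpen_compl⟩

end ISemi

theorem stmt5_general (ι : Type*) (n : ℕ) (hn : 0 < n)
    [TopologicalSpace (ISemi.Elem ι n)] [T1Space (ISemi.Elem ι n)]
    (hshift : ISemi.ShiftContinuous ι n) (a : ISemi.Elem ι n) :
    IsOpen (ISemi.upset a) ∧ IsClosed (ISemi.upset a) := by
  have hclopen : IsClopen (ISemi.upset a) := by
    rw [ISemi.upset_eq_biInter]
    refine (ISemi.dom_finite a).isClopen_biInter fun x hx => ?_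
    obtain ⟨y, hy⟩ := Option.isSome_iff_exists.1 hx
    rw [hy]
    exact ISemi.isClopen_setOf_apply_eq_some hshift hn x y
  exact ⟨hclopen.isOpen, hclopen.isClosed⟩

theorem stmt5 (ι : Type*) [Infinite ι] (n : ℕ) (hn : 0 < n)
    [TopologicalSpace (ISemi.Elem ι n)] [T1Space (ISemi.Elem ι n)]
    (hshift : ISemi.ShiftContinuous ι n) (a : ISemi.Elem ι n) :
    IsOpen (ISemi.upset a) ∧ IsClosed (ISemi.upset a) :=
  stmt5_general ι n hn hshift a
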